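/- arXiv:2301.02920 — 2 statements merged into one kernel-verified Lean document; each statement's English description precedes it below -/
import Mathlib

section
/- Let G be a periodic GGS-group acting on the 2^n-adic tree (n ≥ 2) with R_0 = n − 1, i.e., every entry of the defining vector is 0 or 2^{n−1}. Then the fourth level stabiliser St_G(4) is trivial. Moreover, St_G(3) is nontrivial if and only if e_i = e_{2^{n−1}+i} for all i ∈ {1, …, 2^{n−1} − 1}. -/
/-- The rooted automorphism `a` of the `d`-adic tree (vertices are words over
the alphabet `ZMod d`), acting as the cycle `(1 2 ⋯ d)` on first-level
vertices. -/
def ggsA (d : ℕ) : Equiv.Perm (List (ZMod d)) where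
  toFun w := match w with
    | [] => []
    | u :: t => (u + 1) :: t
  invFun w := match w with
    | [] => []
    | u :: t => (u - 1) :: t
  left_inv w := by cases w <;> simp
  right_inv w := by cases w <;> simp

/-- The underlying function of the directed automorphism `b` with defining
vector `e`, satisfying `ψ(b) = (a^{e_1}, …, a^{e_{d-1}}, b)` (the letter `0`
plays the role of the last letter `d`). -/
def ggsBFun (d : ℕ) (e : ZMod d → ZMod d) : List (ZMod d) → List (ZMod d)
  | [] => []
  | u :: t => u :: (if u = 0 then ggsBFun d e t else (ggsA d ^ (e u).val) t)

/-- The inverse of `ggsBFun`. -/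
def ggsBInv (d : ℕ) (e : ZMod d → ZMod d) : List (ZMod d) → List (ZMod d)
  | [] => []
  | u :: t => u :: (if u = 0 then ggsBInv d e t else ((ggsA d ^ (e u).val)⁻¹) t)

theorem ggsB_left_inv (d : ℕ) (e : ZMod d → ZMod d) :
    ∀ w, ggsBInv d e (ggsBFun d e w) = w := by
  intro w
  induction w with
  | nil => rfl
  | cons u t ih =>
      by_cases hu : u = 0 <;> simp [ggsBFun, ggsBInv, hu, ih]

theorem ggsB_right_inv (d : ℕ) (e : ZMod d → ZMod d) :
    ∀ w, ggsBFun d e (ggsBInv d e w) = w := by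
  intro w
  induction w with
  | nil => rfl
  | cons u t ih =>
      by_cases hu : u = 0 <;> simp [ggsBFun, ggsBInv, hu, ih]

/-- The directed automorphism `b` of the `d`-adic tree with defining vector
`e`, given recursively by `ψ(b) = (a^{e_1}, …, a^{e_{d-1}}, b)`. -/
def ggsB (d : ℕ) (e : ZMod d → ZMod d) : Equiv.Perm (List (ZMod d)) where
  toFun := ggsBFun d e
  invFun := ggsBInv d e
  left_inv := ggsB_left_inv d e
  right_inv := ggsB_right_inv d e

/-- The GGS-group `G = ⟨a, b⟩` acting on the `d`-adic tree with defining
vector `e`. -/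
def ggsGroup (d : ℕ) (e : ZMod d → ZMod d) :
    Subgroup (Equiv.Perm (List (ZMod d))) :=
  Subgroup.closure {ggsA d, ggsB d e}

/-- The `k`-th level stabiliser of a group of tree automorphisms: the subgroup
of elements fixing every vertex (word) at level `k`. -/
def levelStab {A : Type*} (G : Subgroup (Equiv.Perm (List A))) (k : ℕ) :
    Subgroup G where
  carrier := {g | ∀ w : List A, w.length = k → (g : Equiv.Perm (List A)) w = w}
  one_mem' := by intro w hw; rfl
  mul_mem' := by
    intro g h hg hh w hw
    have : ((g * h : G) : Equiv.Perm (List A)) w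
        = (g : Equiv.Perm (List A)) ((h : Equiv.Perm (List A)) w) := rfl
    rw [this, hh w hw, hg w hw]
  inv_mem' := by
    intro g hg w hw
    have h1 : ((g⁻¹ : G) : Equiv.Perm (List A)) w
        = ((g : Equiv.Perm (List A)))⁻¹ w := rfl
    rw [h1]
    conv_lhs => rw [← hg w hw]
    exact Equiv.symm_apply_apply _ _

/-!
Write `H = d/2`, `z = a^H`, and `s x` for the section of `b` at the first-level vertex `x`.
As every `e x` is `0` or `H`, each `s x` is `1`, `z` or `b`, so `G` acts on the first letter
by translations with all first-level sections in `D = ⟨z, b⟩`; hence if no nontrivial element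
of `D` fixes level `m`, then `St_G(m + 1) = 1`. Periodicity forces `e H = 0` (otherwise `bz`
has infinite order); then `b` commutes with `c = zbz`, and every element of `D` is a word
`z^i b^j c^k`, whose sections at `x` and `x + H` are `s x ^ j * s (x + H) ^ k` and
`s (x + H) ^ j * s x ^ k`. So if `s x` moves a vertex `w` that `s (x + H)` fixes, no nontrivial
element of `D` fixes level `|w| + 1`. For `x = 0` the vertex `[x₀, 0]` with `e x₀ = H` works,
giving `St_G(4) = 1`. If `e` is not `H`-periodic, some `p` has `e p = H` and `e (p + H) = 0`,
and `[0]` works for `x = p`, giving `St_G(3) = 1`. If `e` is `H`-periodic, the sections of `b`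
commute on level 2, so the commutator `[b, b^(a^x₀)]` fixes level 3, yet it moves
`[0, 0, x₀, 0]`.
-/

theorem add_self_eq_zero_of_eq_zero_or_eq {M : Type*} [AddMonoid M] {a H : M} (hHH : H + H = 0)
    (ha : a = 0 ∨ a = H) : a + a = 0 := by
  rcases ha with rfl | rfl
  exacts [add_zero 0, hHH]

theorem ZMod.add_self_eq_zero_of_val_add_val {d : ℕ} [NeZero d] {H : ZMod d}
    (hHd : H.val + H.val = d) : H + H = 0 := by
  rw [← ZMod.natCast_zmod_val H, ← Nat.cast_add, hHd, ZMod.natCast_self]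

theorem periodic_iff_forall_val {d : ℕ} [NeZero d] {e : ZMod d → ZMod d} {H : ZMod d}
    (hHd : H.val + H.val = d) (he : e H = e 0) :
    Function.Periodic e H ↔
      ∀ i : ZMod d, 1 ≤ i.val → i.val ≤ H.val - 1 → e i = e (H + i) := by
  refine ⟨fun hper i _ _ => by rw [add_comm, hper], fun h => ?_⟩
  have hHH : H + H = 0 := ZMod.add_self_eq_zero_of_val_add_val hHd
  have hsmall : ∀ i : ZMod d, i.val < H.val → e (i + H) = e i := fun i hi => by
    by_cases hi0 : i = 0
    · rw [hi0, zero_add, he]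
    · rw [add_comm, h i (by simpa [Nat.one_le_iff_ne_zero] using hi0) (by omega)]
  intro x
  by_cases hx : x.val < H.val
  · exact hsmall x hx
  · have hxd := ZMod.val_lt x
    have hxH : (x + H).val < H.val := by
      rw [ZMod.val_add, Nat.mod_eq_sub_mod (by omega), Nat.mod_eq_of_lt (by omega)]
      omega
    rw [← hsmall _ hxH, add_assoc, hHH, add_zero]

section Rotation

variable {d : ℕ}

def ggsRot (y : ZMod d) : Equiv.Perm (List (ZMod d)) := ggsA d ^ y.val

def ggsBSection (e : ZMod d → ZMod d) (x : ZMod d) : Equiv.Perm (List (ZMod d)) :=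
  if x = 0 then ggsB d e else ggsRot (e x)

theorem ggsA_pow_nil (m : ℕ) : (ggsA d ^ m) [] = [] := by
  induction m with
  | zero => rfl
  | succ m ih => rw [pow_succ', Equiv.Perm.mul_apply, ih]; rfl

theorem ggsA_pow_cons (m : ℕ) (x : ZMod d) (w : List (ZMod d)) :
    (ggsA d ^ m) (x :: w) = (x + m) :: w := by
  induction m with
  | zero => simp
  | succ m ih =>
    rw [pow_succ', Equiv.Perm.mul_apply, ih, Nat.cast_succ, ← add_assoc]
    rfl

theorem ggsRot_nil (y : ZMod d) : ggsRot y [] = [] := ggsA_pow_nil _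

theorem ggsB_nil (e : ZMod d → ZMod d) : ggsB d e [] = [] := rfl

theorem ggsBSection_nil (e : ZMod d → ZMod d) (x : ZMod d) : ggsBSection e x [] = [] := by
  unfold ggsBSection; split_ifs
  · rfl
  · exact ggsRot_nil _

theorem ggsB_cons (e : ZMod d → ZMod d) (x : ZMod d) (w : List (ZMod d)) :
    ggsB d e (x :: w) = x :: ggsBSection e x w := by
  simp only [ggsB, Equiv.coe_fn_mk, ggsBFun, ggsBSection, ggsRot]
  split_ifs <;> rfl

theorem ggsB_singleton (e : ZMod d → ZMod d) (x : ZMod d) : ggsB d e [x] = [x] := by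
  rw [ggsB_cons, ggsBSection_nil]

theorem ggsBSection_zero (e : ZMod d → ZMod d) : ggsBSection e 0 = ggsB d e := if_pos rfl

theorem ggsBSection_of_ne_zero (e : ZMod d → ZMod d) {x : ZMod d} (hx : x ≠ 0) :
    ggsBSection e x = ggsRot (e x) := if_neg hx

theorem ggsRot_zero : ggsRot (0 : ZMod d) = 1 := by
  rw [ggsRot, ZMod.val_zero, pow_zero]

theorem ggsRot_commute (y y' : ZMod d) : Commute (ggsRot y) (ggsRot y') :=
  Commute.pow_pow_self _ _ _

variable [NeZero d]

theorem ggsRot_cons (y x : ZMod d) (w : List (ZMod d)) : ggsRot y (x :: w) = (x + y) :: w := by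
  rw [ggsRot, ggsA_pow_cons, ZMod.natCast_zmod_val]

theorem ggsRot_mul_self {y : ZMod d} (hy : y + y = 0) : ggsRot y * ggsRot y = 1 := by
  ext w : 1
  cases w with
  | nil => simp only [Equiv.Perm.mul_apply, ggsRot_nil, Equiv.Perm.one_apply]
  | cons x w =>
    simp only [Equiv.Perm.mul_apply, ggsRot_cons, add_assoc, hy, add_zero, Equiv.Perm.one_apply]

theorem ggsRot_inv_cons (y x : ZMod d) (w : List (ZMod d)) :
    (ggsRot y)⁻¹ (x :: w) = (x - y) :: w := by
  rw [Equiv.Perm.inv_eq_iff_eq, ggsRot_cons, sub_add_cancel]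

theorem ggsBSection_singleton {e : ZMod d → ZMod d} (he0 : e 0 = 0) (x q : ZMod d) :
    ggsBSection e x [q] = [q + e x] := by
  by_cases hx : x = 0
  · rw [hx, ggsBSection_zero, ggsB_singleton, he0, add_zero]
  · rw [ggsBSection_of_ne_zero e hx, ggsRot_cons]

theorem ggsB_mul_self {e : ZMod d → ZMod d} (he : ∀ x, e x + e x = 0) :
    ggsB d e * ggsB d e = 1 := by
  ext w : 1
  rw [Equiv.Perm.mul_apply, Equiv.Perm.one_apply]
  induction w with
  | nil => rfl
  | cons x w ih =>
    rw [ggsB_cons, ggsB_cons]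
    by_cases hx : x = 0
    · rw [hx, ggsBSection_zero, ih]
    · rw [ggsBSection_of_ne_zero e hx, ← Equiv.Perm.mul_apply, ggsRot_mul_self (he x),
        Equiv.Perm.one_apply]

theorem ggsBSection_mul_self {e : ZMod d → ZMod d} (he : ∀ x, e x + e x = 0) (x : ZMod d) :
    ggsBSection e x * ggsBSection e x = 1 := by
  by_cases hx : x = 0
  · rw [hx, ggsBSection_zero, ggsB_mul_self he]
  · rw [ggsBSection_of_ne_zero e hx, ggsRot_mul_self (he x)]

end Rotation

section Dihedral

variable {d : ℕ} (e : ZMod d → ZMod d) (H : ZMod d)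

def ggsBConj : Equiv.Perm (List (ZMod d)) := ggsRot H * ggsB d e * ggsRot H

def ggsDihedral : Subgroup (Equiv.Perm (List (ZMod d))) := Subgroup.closure {ggsRot H, ggsB d e}

def dihedralWord (i j k : Bool) : Equiv.Perm (List (ZMod d)) :=
  cond i (ggsRot H) 1 * (cond j (ggsB d e) 1 * cond k (ggsBConj e H) 1)

variable {e H}

theorem ggsBSection_commute_add (hH0 : H ≠ 0) (hHH : H + H = 0) (heH : e H = 0) (x : ZMod d) :
    Commute (ggsBSection e x) (ggsBSection e (x + H)) := by
  have hsH : ggsBSection e H = 1 := by rw [ggsBSection_of_ne_zero e hH0, heH, ggsRot_zero]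
  by_cases hx : x = 0
  · rw [hx, zero_add, hsH]
    exact Commute.one_right _
  by_cases hxH : x + H = 0
  · have : x = H := by rw [← add_zero x, ← hHH, ← add_assoc, hxH, zero_add]
    rw [hxH, this, hsH]
    exact Commute.one_left _
  rw [ggsBSection_of_ne_zero e hx, ggsBSection_of_ne_zero e hxH]
  exact ggsRot_commute _ _

theorem ggsBConj_nil : ggsBConj e H [] = [] := by
  rw [ggsBConj, Equiv.Perm.mul_apply, Equiv.Perm.mul_apply, ggsRot_nil, ggsB_nil, ggsRot_nil]

variable [NeZero d]

theorem ggsBConj_cons (hHH : H + H = 0) (x : ZMod d) (w : List (ZMod d)) :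
    ggsBConj e H (x :: w) = x :: ggsBSection e (x + H) w := by
  rw [ggsBConj, Equiv.Perm.mul_apply, Equiv.Perm.mul_apply, ggsRot_cons, ggsB_cons, ggsRot_cons,
    add_assoc, hHH, add_zero]

theorem ggsB_commute_ggsBConj (hH0 : H ≠ 0) (hHH : H + H = 0) (heH : e H = 0) :
    Commute (ggsB d e) (ggsBConj e H) := by
  ext w : 1
  cases w with
  | nil => simp only [Equiv.Perm.mul_apply, ggsB_nil, ggsBConj_nil]
  | cons x w =>
    simp only [Equiv.Perm.mul_apply, ggsB_cons, ggsBConj_cons hHH, List.cons.injEq, true_and]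
    exact Equiv.congr_fun (ggsBSection_commute_add hH0 hHH heH x).eq w

theorem ggsBConj_mul_self (hHH : H + H = 0) (he : ∀ x, e x + e x = 0) :
    ggsBConj e H * ggsBConj e H = 1 := by
  have hz := ggsRot_mul_self hHH
  simp only [ggsBConj, mul_assoc]
  rw [← mul_assoc (ggsRot H) (ggsRot H), hz, one_mul, ← mul_assoc (ggsB d e), ggsB_mul_self he,
    one_mul, hz]

theorem exists_dihedralWord_of_mem (hH0 : H ≠ 0) (hHH : H + H = 0) (heH : e H = 0)
    (he : ∀ x, e x + e x = 0) {f : Equiv.Perm (List (ZMod d))} (hf : f ∈ ggsDihedral e H) :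
    ∃ i j k, f = dihedralWord e H i j k := by
  have hz := ggsRot_mul_self hHH
  have hb := ggsB_mul_self he
  have hc := ggsBConj_mul_self hHH he
  have hcb := (ggsB_commute_ggsBConj hH0 hHH heH).eq.symm
  have hbz : ggsB d e * ggsRot H = ggsRot H * ggsBConj e H := by
    rw [ggsBConj, ← mul_assoc, ← mul_assoc, hz, one_mul]
  have hz' : ∀ g, ggsRot H * (ggsRot H * g) = g := fun g => by rw [← mul_assoc, hz, one_mul]
  have hb' : ∀ g, ggsB d e * (ggsB d e * g) = g := fun g => by rw [← mul_assoc, hb, one_mul]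
  have hcb' : ∀ g, ggsBConj e H * (ggsB d e * g) = ggsB d e * (ggsBConj e H * g) := fun g => by
    rw [← mul_assoc, hcb, mul_assoc]
  have hbz' : ∀ g, ggsB d e * (ggsRot H * g) = ggsRot H * (ggsBConj e H * g) := fun g => by
    rw [← mul_assoc, hbz, mul_assoc]
  have hstep : ∀ x ∈ ({ggsRot H, ggsB d e} : Set _), ∀ i j k,
      ∃ i' j' k', x * dihedralWord e H i j k = dihedralWord e H i' j' k' := by
    rintro x (rfl | rfl) i j k
    · refine ⟨!i, j, k, ?_⟩
      cases i <;> simp only [dihedralWord, cond, hz', one_mul, Bool.not_false, Bool.not_true]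
    · cases i
      · refine ⟨false, !j, k, ?_⟩
        cases j <;> simp only [dihedralWord, cond, hb', one_mul, Bool.not_false, Bool.not_true]
      · refine ⟨true, j, !k, ?_⟩
        cases j <;> cases k <;>
          simp only [dihedralWord, cond, hbz, hbz', hc, hcb, hcb', one_mul, mul_one, Bool.not_false,
            Bool.not_true]
  induction hf using Subgroup.closure_induction_left with
  | one => exact ⟨false, false, false, by simp [dihedralWord]⟩
  | mul_left x hx y _ ih =>
    obtain ⟨i, j, k, rfl⟩ := ih
    obtain ⟨i', j', k', h⟩ := hstep x hx i j k
    exact ⟨i', j', k', h⟩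
  | inv_mul_cancel x hx y _ ih =>
    obtain ⟨i, j, k, rfl⟩ := ih
    have hinv : x⁻¹ = x := by
      rcases hx with rfl | rfl
      · exact inv_eq_of_mul_eq_one_left (ggsRot_mul_self hHH)
      · exact inv_eq_of_mul_eq_one_left (ggsB_mul_self he)
    obtain ⟨i', j', k', h⟩ := hstep x hx i j k
    exact ⟨i', j', k', hinv ▸ h⟩

theorem dihedralWord_cons (hHH : H + H = 0) (i j k : Bool) (x : ZMod d) (w : List (ZMod d)) :
    dihedralWord e H i j k (x :: w) =
      (x + cond i H 0) :: (cond j (ggsBSection e x) 1 * cond k (ggsBSection e (x + H)) 1) w := by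
  cases i <;> cases j <;> cases k <;>
    simp only [dihedralWord, cond, Equiv.Perm.mul_apply, Equiv.Perm.one_apply, ggsB_cons,
      ggsBConj_cons hHH, ggsRot_cons, add_zero]

theorem eq_one_of_mem_ggsDihedral (hH0 : H ≠ 0) (hHH : H + H = 0) (heH : e H = 0)
    (he : ∀ x, e x + e x = 0) {x : ZMod d} {w : List (ZMod d)} (hmove : ggsBSection e x w ≠ w)
    (hfix : ggsBSection e (x + H) w = w) {f : Equiv.Perm (List (ZMod d))}
    (hf : f ∈ ggsDihedral e H)
    (hfw : ∀ v : List (ZMod d), v.length = w.length + 1 → f v = v) :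
    f = 1 := by
  obtain ⟨i, j, k, rfl⟩ := exists_dihedralWord_of_mem hH0 hHH heH he hf
  have hx := hfw (x :: w) rfl
  have hxH := hfw ((x + H) :: w) rfl
  rw [dihedralWord_cons hHH, List.cons.injEq] at hx hxH
  rw [add_assoc x H H, hHH, add_zero] at hxH
  cases i <;> cases j <;> cases k <;>
    simp_all [Equiv.Perm.mul_apply, dihedralWord]

end Dihedral

section SectionSubgroup

variable {α : Type*} [AddGroup α]

def sectionSubgroup (D : Subgroup (Equiv.Perm (List α))) : Subgroup (Equiv.Perm (List α)) where
  carrier := {g | g [] = [] ∧ ∃ s, ∀ x, ∃ f ∈ D, ∀ w, g (x :: w) = (x + s) :: f w}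
  one_mem' := ⟨rfl, 0, fun _ => ⟨1, D.one_mem, fun _ => by simp⟩⟩
  mul_mem' := by
    rintro g g' ⟨hg, s, hs⟩ ⟨hg', s', hs'⟩
    refine ⟨by simp [hg, hg'], s' + s, fun x => ?_⟩
    obtain ⟨f', hf', hw'⟩ := hs' x
    obtain ⟨f, hf, hw⟩ := hs (x + s')
    exact ⟨f * f', D.mul_mem hf hf', fun w => by simp [hw', hw, add_assoc]⟩
  inv_mem' := by
    rintro g ⟨hg, s, hs⟩
    refine ⟨by rw [Equiv.Perm.inv_eq_iff_eq, hg], -s, fun x => ?_⟩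
    obtain ⟨f, hf, hw⟩ := hs (x + -s)
    refine ⟨f⁻¹, D.inv_mem hf, fun w => ?_⟩
    rw [Equiv.Perm.inv_eq_iff_eq, hw, neg_add_cancel_right, ← Equiv.Perm.mul_apply,
      mul_inv_cancel, Equiv.Perm.one_apply]

theorem eq_one_of_mem_sectionSubgroup {D : Subgroup (Equiv.Perm (List α))} {m : ℕ}
    (hD : ∀ f ∈ D, (∀ v : List α, v.length = m → f v = v) → f = 1)
    {g : Equiv.Perm (List α)} (hg : g ∈ sectionSubgroup D)
    (hfix : ∀ v : List α, v.length = m + 1 → g v = v) : g = 1 := by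
  obtain ⟨hnil, s, hs⟩ := hg
  have hs0 : s = 0 := by
    obtain ⟨f, -, hw⟩ := hs 0
    have h := hfix (0 :: List.replicate m 0) (by simp)
    rw [hw, List.cons.injEq, zero_add] at h
    exact h.1
  ext w : 1
  cases w with
  | nil => exact hnil
  | cons x w =>
    obtain ⟨f, hf, hw⟩ := hs x
    have hf1 : f = 1 := hD f hf fun v hv => by
      simpa [hw, hs0] using hfix (x :: v) (by simp [hv])
    simp [hw, hs0, hf1]

end SectionSubgroup

section GGSGroup

variable {d : ℕ} {e : ZMod d → ZMod d} {H : ZMod d}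

theorem ggsA_mem_ggsGroup : ggsA d ∈ ggsGroup d e := Subgroup.subset_closure (by simp)

theorem ggsB_mem_ggsGroup : ggsB d e ∈ ggsGroup d e := Subgroup.subset_closure (by simp)

theorem ggsRot_mem_ggsGroup (y : ZMod d) : ggsRot y ∈ ggsGroup d e :=
  pow_mem ggsA_mem_ggsGroup _

theorem ggsBSection_mem_ggsDihedral (hR : ∀ x, e x = 0 ∨ e x = H) (x : ZMod d) :
    ggsBSection e x ∈ ggsDihedral e H := by
  by_cases hx : x = 0
  · rw [hx, ggsBSection_zero]
    exact Subgroup.subset_closure (by simp)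
  rw [ggsBSection_of_ne_zero e hx]
  rcases hR x with h | h
  · rw [h, ggsRot_zero]
    exact Subgroup.one_mem _
  · rw [h]
    exact Subgroup.subset_closure (by simp)

theorem ggsGroup_le_sectionSubgroup (hR : ∀ x, e x = 0 ∨ e x = H) :
    ggsGroup d e ≤ sectionSubgroup (ggsDihedral e H) := by
  rw [ggsGroup, Subgroup.closure_le]
  rintro g (rfl | rfl)
  · exact ⟨rfl, 1, fun x => ⟨1, Subgroup.one_mem _, fun w => rfl⟩⟩
  · exact ⟨rfl, 0, fun x => ⟨ggsBSection e x, ggsBSection_mem_ggsDihedral hR x,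
      fun w => by rw [ggsB_cons, add_zero]⟩⟩

theorem levelStab_ggsGroup_eq_bot [NeZero d] (hH0 : H ≠ 0) (hHH : H + H = 0) (heH : e H = 0)
    (hR : ∀ x, e x = 0 ∨ e x = H) {x : ZMod d} {w : List (ZMod d)}
    (hmove : ggsBSection e x w ≠ w) (hfix : ggsBSection e (x + H) w = w) :
    levelStab (ggsGroup d e) (w.length + 2) = ⊥ := by
  have he : ∀ y, e y + e y = 0 := fun y => add_self_eq_zero_of_eq_zero_or_eq hHH (hR y)
  rw [Subgroup.eq_bot_iff_forall]
  intro g hg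
  exact Subtype.ext <| eq_one_of_mem_sectionSubgroup
    (fun f hf => eq_one_of_mem_ggsDihedral hH0 hHH heH he hmove hfix hf)
    (ggsGroup_le_sectionSubgroup hR g.2) hg

theorem not_isOfFinOrder_ggsB_mul_ggsRot [NeZero d] (hH0 : H ≠ 0) (hHH : H + H = 0)
    (hHe : e H = H) : ¬IsOfFinOrder (ggsB d e * ggsRot H) := by
  set x := ggsB d e * ggsRot H
  have hsingle : ∀ k : ℕ, (x ^ k) [0] = [k * H] := by
    intro k
    induction k with
    | zero => simp
    | succ k ih =>
      rw [pow_succ', Equiv.Perm.mul_apply, ih, Equiv.Perm.mul_apply, ggsRot_cons, ggsB_singleton]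
      push_cast
      ring_nf
  have hsq : ∀ w, (x * x) (0 :: w) = 0 :: x w := fun w => by
    simp only [x, Equiv.Perm.mul_apply, ggsRot_cons, zero_add, ggsB_cons, hHH,
      ggsBSection_of_ne_zero e hH0, hHe, ggsBSection_zero]
  have hpow : ∀ (k : ℕ) w, ((x * x) ^ k) (0 :: w) = 0 :: (x ^ k) w := by
    intro k
    induction k with
    | zero => simp
    | succ k ih =>
      intro w
      rw [pow_succ', Equiv.Perm.mul_apply, ih, hsq, pow_succ', Equiv.Perm.mul_apply]
      rfl
  intro hfin
  have hpos := hfin.orderOf_pos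
  obtain ⟨k, hk | hk⟩ := Nat.even_or_odd' (orderOf x)
  · have hxk : x ^ k = 1 := by
      ext w : 1
      simpa [← sq, ← pow_mul, ← hk, pow_orderOf_eq_one] using (hpow k w).symm
    have := orderOf_le_of_pow_eq_one (by omega) hxk
    omega
  · have h := hsingle (orderOf x)
    rw [pow_orderOf_eq_one, hk, Equiv.Perm.one_apply, List.cons.injEq] at h
    push_cast at h
    apply hH0
    linear_combination -h.1 - (k : ZMod d) * hHH

end GGSGroup

section PeriodicDefiningVector

variable {d : ℕ} [NeZero d] {e : ZMod d → ZMod d} {H : ZMod d}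

theorem ggsB_ggsRot_pair (he0 : e 0 = 0) (hper : Function.Periodic e H) {y : ZMod d}
    (hy : y = 0 ∨ y = H) (p q : ZMod d) :
    ggsB d e (ggsRot y [p, q]) = ggsRot y (ggsB d e [p, q]) := by
  have hey : e (p + y) = e p := by rcases hy with rfl | rfl <;> simp [hper p]
  simp only [ggsRot_cons, ggsB_cons, ggsBSection_singleton he0, hey]

theorem ggsBSection_commute_pair (he0 : e 0 = 0) (hR : ∀ x, e x = 0 ∨ e x = H)
    (hper : Function.Periodic e H) (x y p q : ZMod d) :
    ggsBSection e x (ggsBSection e y [p, q]) = ggsBSection e y (ggsBSection e x [p, q]) := by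
  by_cases hx : x = 0 <;> by_cases hy : y = 0
  · rw [hx, hy]
  · rw [hx, ggsBSection_zero, ggsBSection_of_ne_zero e hy, ggsB_ggsRot_pair he0 hper (hR y)]
  · rw [hy, ggsBSection_zero, ggsBSection_of_ne_zero e hx, ggsB_ggsRot_pair he0 hper (hR x)]
  · rw [ggsBSection_of_ne_zero e hx, ggsBSection_of_ne_zero e hy, ← Equiv.Perm.mul_apply,
      (ggsRot_commute _ _).eq, Equiv.Perm.mul_apply]

theorem ggsRot_inv_mul_ggsB_mul_ggsRot_cons (y x : ZMod d) (w : List (ZMod d)) :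
    ((ggsRot y)⁻¹ * ggsB d e * ggsRot y) (x :: w) = x :: ggsBSection e (x + y) w := by
  rw [Equiv.Perm.mul_apply, Equiv.Perm.mul_apply, ggsRot_cons, ggsB_cons, ggsRot_inv_cons,
    add_sub_cancel_right]

theorem levelStab_three_ne_bot (hH0 : H ≠ 0) (hHH : H + H = 0) (he0 : e 0 = 0)
    (hR : ∀ x, e x = 0 ∨ e x = H) (hper : Function.Periodic e H) {x₀ : ZMod d}
    (hx₀ : e x₀ = H) : levelStab (ggsGroup d e) 3 ≠ ⊥ := by
  have he : ∀ y, e y + e y = 0 := fun y => add_self_eq_zero_of_eq_zero_or_eq hHH (hR y)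
  have hinv : ∀ y w, ggsBSection e y (ggsBSection e y w) = w := fun y w => by
    rw [← Equiv.Perm.mul_apply, ggsBSection_mul_self he, Equiv.Perm.one_apply]
  set c := (ggsRot x₀)⁻¹ * ggsB d e * ggsRot x₀
  -- the commutator `[b, c]`, as `b` and `c` are involutions
  set g := ggsB d e * c * ggsB d e * c
  have hg : g ∈ ggsGroup d e := by
    have hc : c ∈ ggsGroup d e := mul_mem (mul_mem (inv_mem (ggsRot_mem_ggsGroup _))
      ggsB_mem_ggsGroup) (ggsRot_mem_ggsGroup _)
    exact mul_mem (mul_mem (mul_mem ggsB_mem_ggsGroup hc) ggsB_mem_ggsGroup) hc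
  have hc_cons : ∀ y w, c (y :: w) = y :: ggsBSection e (y + x₀) w :=
    ggsRot_inv_mul_ggsB_mul_ggsRot_cons x₀
  have hg_cons : ∀ y w, g (y :: w) = y :: ggsBSection e y (ggsBSection e (y + x₀)
      (ggsBSection e y (ggsBSection e (y + x₀) w))) := fun y w => by
    rw [Equiv.Perm.mul_apply, Equiv.Perm.mul_apply, Equiv.Perm.mul_apply, hc_cons, ggsB_cons,
      hc_cons, ggsB_cons]
  have hx₀0 : x₀ ≠ 0 := fun h => hH0 (by rw [← hx₀, h, he0])
  have hS₀ : ggsBSection e x₀ = ggsRot H := by rw [ggsBSection_of_ne_zero e hx₀0, hx₀]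
  have hSH : ggsBSection e H = 1 := by
    rw [ggsBSection_of_ne_zero e hH0, ← zero_add H, hper, he0, ggsRot_zero]
  intro hbot
  have hg1 : g = 1 := by
    have hmem : (⟨g, hg⟩ : ggsGroup d e) ∈ levelStab (ggsGroup d e) 3 := by
      intro w hw
      match w, hw with
      | [y, p, q], _ =>
        rw [hg_cons, ggsBSection_commute_pair he0 hR hper y (y + x₀) p q, hinv, hinv]
    rw [hbot, Subgroup.mem_bot] at hmem
    exact congrArg Subtype.val hmem
  have h := hg_cons 0 [0, x₀, 0]
  simp only [hg1, Equiv.Perm.one_apply, zero_add, ggsBSection_zero, hS₀, ggsRot_cons, ggsB_cons,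
    hSH, hHH, List.cons.injEq, true_and, and_true] at h
  exact hH0 h.symm

end PeriodicDefiningVector

section ThirdAndFourthLevel

variable {d : ℕ} [NeZero d] {e : ZMod d → ZMod d} {H : ZMod d}

theorem levelStab_four_eq_bot (hH0 : H ≠ 0) (hHH : H + H = 0) (he0 : e 0 = 0) (heH : e H = 0)
    (hR : ∀ x, e x = 0 ∨ e x = H) {x₀ : ZMod d} (hx₀ : e x₀ = H) :
    levelStab (ggsGroup d e) 4 = ⊥ := by
  refine levelStab_ggsGroup_eq_bot (x := 0) (w := [x₀, 0]) hH0 hHH heH hR ?_ ?_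
  · rw [ggsBSection_zero, ggsB_cons, ggsBSection_singleton he0, hx₀, zero_add]
    simpa using hH0
  · rw [zero_add, ggsBSection_of_ne_zero e hH0, heH, ggsRot_zero, Equiv.Perm.one_apply]

theorem levelStab_three_ne_bot_iff (hH0 : H ≠ 0) (hHH : H + H = 0) (he0 : e 0 = 0)
    (heH : e H = 0) (hR : ∀ x, e x = 0 ∨ e x = H) {x₀ : ZMod d} (hx₀ : e x₀ = H) :
    levelStab (ggsGroup d e) 3 ≠ ⊥ ↔ Function.Periodic e H := by
  refine ⟨fun hne => ?_, fun hper => levelStab_three_ne_bot hH0 hHH he0 hR hper hx₀⟩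
  by_contra hper
  obtain ⟨p, hp, hpH⟩ : ∃ p, e p = H ∧ e (p + H) = 0 := by
    obtain ⟨x, hx⟩ : ∃ x, e (x + H) ≠ e x := by simpa [Function.Periodic] using hper
    rcases hR x with h | h
    · refine ⟨x + H, (hR (x + H)).resolve_left (h ▸ hx), ?_⟩
      rw [add_assoc, hHH, add_zero, h]
    · exact ⟨x, h, (hR (x + H)).resolve_right (h ▸ hx)⟩
  refine hne (levelStab_ggsGroup_eq_bot (x := p) (w := [0]) hH0 hHH heH hR ?_ ?_)
  · rw [ggsBSection_singleton he0, hp, zero_add]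
    simpa using hH0
  · rw [ggsBSection_singleton he0, hpH, add_zero]

end ThirdAndFourthLevel

theorem ggs_two_group_level_stabilisers_general (n : ℕ)
    (e : ZMod (2 ^ n) → ZMod (2 ^ n)) (he0 : e 0 = 0) (hne : ∃ i, e i ≠ 0)
    (hR0 : ∀ i, e i = 0 ∨ e i = ((2 ^ (n - 1) : ℕ) : ZMod (2 ^ n)))
    (hper : ∀ g : ggsGroup (2 ^ n) e, IsOfFinOrder g) :
    levelStab (ggsGroup (2 ^ n) e) 4 = ⊥ ∧
      (levelStab (ggsGroup (2 ^ n) e) 3 ≠ ⊥ ↔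
        ∀ i : ZMod (2 ^ n), 1 ≤ i.val → i.val ≤ 2 ^ (n - 1) - 1 →
          e i = e (((2 ^ (n - 1) : ℕ) : ZMod (2 ^ n)) + i)) := by
  set H : ZMod (2 ^ n) := ((2 ^ (n - 1) : ℕ) : ZMod (2 ^ n))
  obtain ⟨x₀, hx₀0⟩ := hne
  have hx₀ : e x₀ = H := (hR0 x₀).resolve_left hx₀0
  have hH0 : H ≠ 0 := hx₀ ▸ hx₀0
  have hn : n ≠ 0 := by
    rintro rfl
    exact hH0 (Subsingleton.elim (α := ZMod 1) _ _)
  have hHval : H.val = 2 ^ (n - 1) :=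
    ZMod.val_cast_of_lt (Nat.pow_lt_pow_right one_lt_two (by omega))
  have hHd : H.val + H.val = 2 ^ n := by
    rw [hHval, ← two_mul, ← pow_succ', Nat.sub_add_cancel (by omega)]
  have hHH : H + H = 0 := ZMod.add_self_eq_zero_of_val_add_val hHd
  have heH : e H = 0 := (hR0 H).resolve_right fun hHe =>
    not_isOfFinOrder_ggsB_mul_ggsRot hH0 hHH hHe <| (ggsGroup _ e).subtype.isOfFinOrder
      (hper ⟨_, mul_mem ggsB_mem_ggsGroup (ggsRot_mem_ggsGroup H)⟩)
  refine ⟨levelStab_four_eq_bot hH0 hHH he0 heH hR0 hx₀, ?_⟩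
  rw [levelStab_three_ne_bot_iff hH0 hHH he0 heH hR0 hx₀,
    periodic_iff_forall_val hHd (heH.trans he0.symm), hHval]

/-- Let `G` be a periodic GGS-group on the `2^n`-adic tree (`n ≥ 2`) with
`R₀ = n - 1`, i.e. every entry of the defining vector is `0` or `2^{n-1}`.
Then `St_G(4)` is trivial, and `St_G(3)` is nontrivial iff
`e_i = e_{2^{n-1}+i}` for all `i ∈ {1, …, 2^{n-1}-1}`. -/
theorem ggs_two_group_level_stabilisers (n : ℕ) (hn : 2 ≤ n)
    (e : ZMod (2 ^ n) → ZMod (2 ^ n)) (he0 : e 0 = 0) (hne : ∃ i, e i ≠ 0)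
    (hR0 : ∀ i, e i = 0 ∨ e i = ((2 ^ (n - 1) : ℕ) : ZMod (2 ^ n)))
    (hper : ∀ g : ggsGroup (2 ^ n) e, IsOfFinOrder g) :
    levelStab (ggsGroup (2 ^ n) e) 4 = ⊥ ∧
      (levelStab (ggsGroup (2 ^ n) e) 3 ≠ ⊥ ↔
        ∀ i : ZMod (2 ^ n), 1 ≤ i.val → i.val ≤ 2 ^ (n - 1) - 1 →
          e i = e (((2 ^ (n - 1) : ℕ) : ZMod (2 ^ n)) + i)) :=
  ggs_two_group_level_stabilisers_general n e he0 hne hR0 hper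
end

section
/- Let G = ⟨a, b⟩ be a GGS-group acting on the p^n-adic tree with defining vector e, let p^{R_0} be the largest power of p dividing all e_i, and set S[0] = e_1 + e_2 + ⋯ + e_{p^n−1}. If p^n divides S[0], then the order of the element ab in G equals p^{2n − R_0}. -/
section

variable {d : ℕ} {e : ZMod d → ZMod d}

theorem ggsA_pow_apply_cons (k : ℕ) (u : ZMod d) (t : List (ZMod d)) :
    (ggsA d ^ k) (u :: t) = (u + k) :: t := by
  induction k with
  | zero => simp
  | succ k ih =>
    rw [pow_succ', Equiv.Perm.mul_apply, ih]
    change (u + k + 1) :: t = _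
    push_cast
    rw [add_assoc]

theorem ggsA_pow_eq_one_iff (k : ℕ) : ggsA d ^ k = 1 ↔ d ∣ k := by
  rw [← ZMod.natCast_eq_zero_iff]
  constructor
  · intro h
    have h0 := congrArg (· [(0 : ZMod d)]) h
    simpa [ggsA_pow_apply_cons] using h0
  · intro hk
    ext1 w
    cases w with
    | nil => exact Equiv.Perm.pow_apply_eq_self_of_apply_eq_self rfl k
    | cons u t => simp [ggsA_pow_apply_cons, hk]

theorem ggsB_apply_cons (u : ZMod d) (t : List (ZMod d)) :
    ggsB d e (u :: t) = u :: (if u = 0 then ggsB d e t else (ggsA d ^ (e u).val) t) := rfl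

theorem ggsB_pow_apply_cons (k : ℕ) (u : ZMod d) (t : List (ZMod d)) :
    (ggsB d e ^ k) (u :: t) =
      u :: (if u = 0 then (ggsB d e ^ k) t else (ggsA d ^ ((e u).val * k)) t) := by
  induction k with
  | zero => simp
  | succ k ih =>
    rw [pow_succ', Equiv.Perm.mul_apply, ih, ggsB_apply_cons]
    split_ifs
    · rfl
    · rw [← Equiv.Perm.mul_apply, ← pow_add, mul_add_one, add_comm]

theorem ggsB_pow_eq_one_iff (k : ℕ) : ggsB d e ^ k = 1 ↔ ∀ u ≠ 0, d ∣ (e u).val * k := by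
  simp_rw [← ggsA_pow_eq_one_iff]
  constructor
  · intro h u hu
    ext1 t
    have ht := congrArg (· (u :: t)) h
    simpa [ggsB_pow_apply_cons, hu] using ht
  · intro h
    ext1 w
    induction w with
    | nil => exact Equiv.Perm.pow_apply_eq_self_of_apply_eq_self rfl k
    | cons u t ih =>
      rw [ggsB_pow_apply_cons]
      split_ifs with hu
      · rw [ih]; rfl
      · rw [h u hu]; rfl

variable (d e) in
/-- The section of `ab` at the first-level vertex `v`. -/
def ggsSection (v : ZMod d) : Equiv.Perm (List (ZMod d)) :=
  if v = 0 then ggsB d e else ggsA d ^ (e v).val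

variable (d e) in
/-- The section of `(ab)^k` at the first-level vertex `u`. -/
def ggsPowSection : ℕ → ZMod d → Equiv.Perm (List (ZMod d))
  | 0, _ => 1
  | k + 1, u => ggsSection d e (u + k) * ggsPowSection k u

theorem ggsA_mul_ggsB_pow_apply_cons (k : ℕ) (u : ZMod d) (t : List (ZMod d)) :
    ((ggsA d * ggsB d e) ^ k) (u :: t) = (u + k) :: ggsPowSection d e k u t := by
  induction k with
  | zero => simp [ggsPowSection]
  | succ k ih =>
    rw [pow_succ', Equiv.Perm.mul_apply, ih, Equiv.Perm.mul_apply, ggsB_apply_cons]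
    change (u + k + 1) :: _ = _
    rw [Nat.cast_succ, ← add_assoc, ggsPowSection, Equiv.Perm.mul_apply, ggsSection]
    split_ifs <;> rfl

theorem ggsPowSection_add (k l : ℕ) (u : ZMod d) :
    ggsPowSection d e (k + l) u = ggsPowSection d e l (u + k) * ggsPowSection d e k u := by
  induction l with
  | zero => simp [ggsPowSection]
  | succ l ih =>
    rw [← add_assoc, ggsPowSection, ih, ggsPowSection, ← mul_assoc]
    push_cast
    rw [add_assoc]

theorem ggsPowSection_mul (m : ℕ) (u : ZMod d) :
    ggsPowSection d e (d * m) u = ggsPowSection d e d u ^ m := by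
  induction m with
  | zero => rfl
  | succ m ih => rw [Nat.mul_succ, ggsPowSection_add, ih, pow_succ', Nat.cast_mul,
      ZMod.natCast_self, zero_mul, add_zero]

theorem ggsPowSection_add_one (u : ZMod d) :
    ggsPowSection d e d (u + 1) * ggsSection d e u = ggsSection d e u * ggsPowSection d e d u := by
  have h := ggsPowSection_add (e := e) 1 d u
  rw [add_comm 1 d, ggsPowSection, ZMod.natCast_self, add_zero] at h
  simpa [ggsPowSection] using h.symm

theorem isConj_ggsPowSection [NeZero d] (u : ZMod d) :
    IsConj (ggsPowSection d e d 0) (ggsPowSection d e d u) := by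
  rw [← ZMod.natCast_zmod_val u]
  induction u.val with
  | zero => rw [Nat.cast_zero]
  | succ k ih =>
    refine ih.trans (isConj_iff.2 ⟨ggsSection d e k, ?_⟩)
    rw [Nat.cast_succ, ← ggsPowSection_add_one, mul_inv_cancel_right]

theorem ggsPowSection_zero_of_lt (he0 : e 0 = 0) {k : ℕ} (hk : k < d) :
    ggsPowSection d e (k + 1) 0 = ggsA d ^ (∑ j ∈ Finset.range (k + 1), (e j).val) * ggsB d e := by
  induction k with
  | zero => simp [ggsPowSection, ggsSection, he0]
  | succ k ih =>
    have hk0 : ((k + 1 : ℕ) : ZMod d) ≠ 0 := by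
      rw [Ne, ZMod.natCast_eq_zero_iff]
      exact Nat.not_dvd_of_pos_of_lt k.succ_pos hk
    rw [ggsPowSection, ih (by omega), zero_add, ggsSection, if_neg hk0, ← mul_assoc, ← pow_add,
      Finset.sum_range_succ _ (k + 1), add_comm]

/-- Around the whole cycle, the powers of `a` met along the way add up to `S[0]`. -/
theorem ggsPowSection_zero [NeZero d] (he0 : e 0 = 0)
    (hS : d ∣ ∑ i ∈ Finset.range d, (e i).val) : ggsPowSection d e d 0 = ggsB d e := by
  obtain ⟨k, hk⟩ : ∃ k, d = k + 1 := Nat.exists_eq_succ_of_ne_zero (NeZero.ne d)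
  have h := ggsPowSection_zero_of_lt he0 (hk ▸ k.lt_succ_self : k < d)
  rw [← hk, (ggsA_pow_eq_one_iff _).2 hS, one_mul] at h
  exact h

theorem ggsA_mul_ggsB_pow_mul_eq_one_iff [NeZero d] (he0 : e 0 = 0)
    (hS : d ∣ ∑ i ∈ Finset.range d, (e i).val) (m : ℕ) :
    (ggsA d * ggsB d e) ^ (d * m) = 1 ↔ ggsB d e ^ m = 1 := by
  have happly (u : ZMod d) (t : List (ZMod d)) :
      ((ggsA d * ggsB d e) ^ (d * m)) (u :: t) = u :: (ggsPowSection d e d u ^ m) t := by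
    rw [ggsA_mul_ggsB_pow_apply_cons, ggsPowSection_mul, Nat.cast_mul, ZMod.natCast_self,
      zero_mul, add_zero]
  constructor
  · intro h
    ext1 t
    have ht := congrArg (· ((0 : ZMod d) :: t)) h
    simpa [happly, ggsPowSection_zero he0 hS] using ht
  · intro h
    ext1 w
    cases w with
    | nil => exact Equiv.Perm.pow_apply_eq_self_of_apply_eq_self rfl _
    | cons u t =>
      have hconj := (isConj_ggsPowSection (e := e) u).pow m
      rw [ggsPowSection_zero he0 hS, h, isConj_one_right] at hconj
      rw [happly, hconj]
      rfl

theorem orderOf_ggsA_mul_ggsB [NeZero d] (he0 : e 0 = 0)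
    (hS : d ∣ ∑ i ∈ Finset.range d, (e i).val) :
    orderOf (ggsA d * ggsB d e) = d * orderOf (ggsB d e) := by
  have hiff := ggsA_mul_ggsB_pow_mul_eq_one_iff he0 hS
  obtain ⟨m, hm⟩ : d ∣ orderOf (ggsA d * ggsB d e) := by
    have h0 : ((ggsA d * ggsB d e) ^ orderOf (ggsA d * ggsB d e)) [0] = [0] := by
      rw [pow_orderOf_eq_one]; rfl
    rw [ggsA_mul_ggsB_pow_apply_cons, List.cons_eq_cons, zero_add,
      ZMod.natCast_eq_zero_iff] at h0
    exact h0.1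
  apply Nat.dvd_antisymm
  · exact orderOf_dvd_of_pow_eq_one ((hiff _).2 (pow_orderOf_eq_one _))
  · rw [hm]
    exact mul_dvd_mul_left d (orderOf_dvd_of_pow_eq_one ((hiff m).1 (hm ▸ pow_orderOf_eq_one _)))

end

theorem Nat.Prime.pow_dvd_mul_pow_iff {p R x : ℕ} (hp : p.Prime) (hR : p ^ R ∣ x)
    (hR1 : ¬ p ^ (R + 1) ∣ x) (n j : ℕ) : p ^ n ∣ x * p ^ j ↔ n ≤ R + j := by
  obtain ⟨f, rfl⟩ := hR
  have hpf : ¬ p ∣ f := fun h => hR1 (pow_succ p R ▸ mul_dvd_mul_left _ h)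
  rw [mul_right_comm, ← pow_add,
    (Nat.Coprime.pow_left n ((hp.coprime_iff_not_dvd).2 hpf)).dvd_mul_right,
    Nat.pow_dvd_pow_iff_le_right hp.one_lt]

theorem ZMod.lt_of_pow_dvd_val {p n R : ℕ} (hp : 1 < p) {x : ZMod (p ^ n)} (hR : p ^ R ∣ x.val)
    (hx : x.val ≠ 0) : R < n := by
  have : NeZero (p ^ n) := ⟨pow_ne_zero n (by omega)⟩
  exact (Nat.pow_lt_pow_iff_right hp).1
    ((Nat.le_of_dvd (Nat.pos_of_ne_zero hx) hR).trans_lt (ZMod.val_lt x))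

theorem orderOf_ggsB {p n R : ℕ} [hp : Fact p.Prime] {e : ZMod (p ^ n) → ZMod (p ^ n)}
    (he0 : e 0 = 0) (hdvd : ∀ u, p ^ R ∣ (e u).val) (hmax : ∃ i, ¬ p ^ (R + 1) ∣ (e i).val) :
    orderOf (ggsB (p ^ n) e) = p ^ (n - R) := by
  obtain ⟨i, hi⟩ := hmax
  have hi0 : (e i).val ≠ 0 := fun h => hi (h ▸ dvd_zero _)
  have hRn : R < n := ZMod.lt_of_pow_dvd_val hp.out.one_lt (hdvd i) hi0
  obtain ⟨k, hk⟩ : ∃ k, n - R = k + 1 := Nat.exists_eq_succ_of_ne_zero (by omega)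
  rw [hk]
  refine orderOf_eq_prime_pow ?_ ?_ <;> rw [ggsB_pow_eq_one_iff]
  · intro h
    have := (hp.out.pow_dvd_mul_pow_iff (hdvd i) hi n k).1
      (h i fun h0 => hi0 (by rw [h0, he0, ZMod.val_zero]))
    omega
  · intro u _
    have hsplit : p ^ n = p ^ R * p ^ (n - R) := by rw [← pow_add, Nat.add_sub_cancel' hRn.le]
    rw [← hk]
    exact (dvd_of_eq hsplit).trans (mul_dvd_mul_right (hdvd u) _)

theorem ggs_order_ab_general (p n : ℕ) (hp : p.Prime)
    (e : ZMod (p ^ n) → ZMod (p ^ n)) (he0 : e 0 = 0)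
    (R₀ : ℕ) (hdvd : ∀ i, p ^ R₀ ∣ (e i).val)
    (hmax : ∃ i, ¬ p ^ (R₀ + 1) ∣ (e i).val)
    (hS : p ^ n ∣ ∑ i ∈ Finset.range (p ^ n), (e (i : ZMod (p ^ n))).val) :
    orderOf (ggsA (p ^ n) * ggsB (p ^ n) e) = p ^ (2 * n - R₀) := by
  have : Fact p.Prime := ⟨hp⟩
  have : NeZero (p ^ n) := ⟨pow_ne_zero n hp.ne_zero⟩
  obtain ⟨i, hi⟩ := hmax
  have hRn : R₀ < n := ZMod.lt_of_pow_dvd_val hp.one_lt (hdvd i) (fun h => hi (h ▸ dvd_zero _))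
  rw [orderOf_ggsA_mul_ggsB he0 hS, orderOf_ggsB he0 hdvd ⟨i, hi⟩, ← pow_add]
  congr 1
  omega

/-- For a GGS-group `G = ⟨a,b⟩` on the `p^n`-adic tree with nonzero defining
vector `e`, where `p^{R₀}` is the largest power of `p` dividing all entries of
`e` and `S[0] = e_1 + ⋯ + e_{p^n-1}`: if `p^n ∣ S[0]`, then the order of `ab`
is `p^{2n - R₀}`. -/
theorem ggs_order_ab (p n : ℕ) (hp : p.Prime) (hn : 1 ≤ n)
    (e : ZMod (p ^ n) → ZMod (p ^ n)) (he0 : e 0 = 0) (hne : ∃ i, e i ≠ 0)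
    (R₀ : ℕ) (hdvd : ∀ i, p ^ R₀ ∣ (e i).val)
    (hmax : ∃ i, ¬ p ^ (R₀ + 1) ∣ (e i).val)
    (hS : p ^ n ∣ ∑ i ∈ Finset.range (p ^ n), (e (i : ZMod (p ^ n))).val) :
    orderOf (ggsA (p ^ n) * ggsB (p ^ n) e) = p ^ (2 * n - R₀) :=
  ggs_order_ab_general p n hp e he0 R₀ hdvd hmax hS
end
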